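/- Let a torus T = (S^1)^2 act with weights: for the singularity (x^a, y^b) with 2 ≤ a ≤ b, the weight set is W = ({(i,j) : 2 ≤ i ≤ a, -b+1 ≤ j ≤ 0} \ {(a,0)}) ∪ ({(i,j) : -a+1 ≤ i ≤ 0, 2 ≤ j ≤ b} \ {(0,b)}). Then 0 is in the convex hull of W if and only if NOT (a = 2 and b ∈ {2,3,4}). -/

import Mathlib

/-!
For `a = 2` and `b ≤ 4` every weight `(i, j)` satisfies `8 i + 5 j > 0`, so the weights lie in an
open half-plane missing `0`. Otherwise `(a - 1)(b - 1) ≥ 4`, and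
`2(a - 1) • (2, 1 - b) + 4 • (1 - a, 2) + ((a - 1)(b - 1) - 4) • (0, 2) = 0`
exhibits `0` as a convex combination of three weights.
-/

section ConvexHull

variable {𝕜 E ι : Type*} [Field 𝕜] [LinearOrder 𝕜] [IsStrictOrderedRing 𝕜] [AddCommGroup E]
  [Module 𝕜 E] {s : Set E}

theorem zero_mem_convexHull_of_sum_smul_eq_zero {t : Finset ι} {w : ι → 𝕜} {z : ι → E}
    (hw : ∀ i ∈ t, 0 ≤ w i) (hw_pos : 0 < ∑ i ∈ t, w i) (hz : ∀ i ∈ t, z i ∈ s)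
    (h : ∑ i ∈ t, w i • z i = 0) : (0 : E) ∈ convexHull 𝕜 s := by
  simpa [Finset.centerMass, h] using t.centerMass_mem_convexHull hw hw_pos hz

theorem zero_notMem_convexHull_of_forall_pos (f : E →ₗ[𝕜] 𝕜) (hf : ∀ x ∈ s, 0 < f x) :
    (0 : E) ∉ convexHull 𝕜 s := fun h => by
  have : (0 : 𝕜) < f 0 := convexHull_min hf (convex_halfSpace_gt f.isLinear 0) h
  simp at this

end ConvexHull

def IsWeight (a b i j : ℤ) : Prop :=
  (2 ≤ i ∧ i ≤ a ∧ -b + 1 ≤ j ∧ j ≤ 0 ∧ (i, j) ≠ (a, 0)) ∨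
    (-a + 1 ≤ i ∧ i ≤ 0 ∧ 2 ≤ j ∧ j ≤ b ∧ (i, j) ≠ (0, b))

def weightSet (a b : ℤ) : Set (ℝ × ℝ) :=
  {p | ∃ i j : ℤ, p = ((i : ℝ), (j : ℝ)) ∧ IsWeight a b i j}

theorem isWeight_iff {a b i j : ℤ} : IsWeight a b i j ↔
    (2 ≤ i ∧ i ≤ a ∧ -b + 1 ≤ j ∧ j ≤ 0 ∧ ¬(i = a ∧ j = 0)) ∨
      (-a + 1 ≤ i ∧ i ≤ 0 ∧ 2 ≤ j ∧ j ≤ b ∧ ¬(i = 0 ∧ j = b)) := by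
  simp only [IsWeight, ne_eq, Prod.mk.injEq]

theorem mem_weightSet {a b i j : ℤ} (h : IsWeight a b i j) :
    ((i : ℝ), (j : ℝ)) ∈ weightSet a b :=
  ⟨i, j, rfl, h⟩

theorem eight_mul_add_five_mul_pos {b i j : ℤ} (hb : b ≤ 4) (h : IsWeight 2 b i j) :
    0 < 8 * i + 5 * j := by
  rw [isWeight_iff] at h
  omega

theorem zero_notMem_convexHull_weightSet_two {b : ℤ} (hb : b ≤ 4) :
    (0 : ℝ × ℝ) ∉ convexHull ℝ (weightSet 2 b) := by
  refine zero_notMem_convexHull_of_forall_pos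
    ((8 : ℝ) • LinearMap.fst ℝ ℝ ℝ + (5 : ℝ) • LinearMap.snd ℝ ℝ ℝ) ?_
  rintro _ ⟨i, j, rfl, hij⟩
  have : (0 : ℝ) < 8 * i + 5 * j := by exact_mod_cast eight_mul_add_five_mul_pos hb hij
  simpa using this

theorem zero_mem_convexHull_weightSet {a b : ℤ} (ha : 2 ≤ a) (hb : 3 ≤ b)
    (hprod : 4 ≤ (a - 1) * (b - 1)) : (0 : ℝ × ℝ) ∈ convexHull ℝ (weightSet a b) := by
  have hprod' : (4 : ℝ) ≤ (a - 1) * (b - 1) := by exact_mod_cast hprod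
  have ha' : (2 : ℝ) ≤ a := by exact_mod_cast ha
  refine zero_mem_convexHull_of_sum_smul_eq_zero (t := Finset.univ)
    (w := ![2 * ((a : ℝ) - 1), 4, ((a : ℝ) - 1) * ((b : ℝ) - 1) - 4])
    (z := ![(2, 1 - b), (1 - a, 2), (0, 2)]) ?_ ?_ ?_ ?_
  · simpa [Fin.forall_fin_succ] using ⟨by linarith, hprod'⟩
  · simp only [Fin.sum_univ_three, Fin.isValue, Matrix.cons_val]
    linarith
  · simp only [Finset.mem_univ, forall_const, Fin.forall_fin_succ, Fin.isValue, Matrix.cons_val,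
      IsEmpty.forall_iff, and_true]
    refine ⟨?_, ?_, ?_⟩
    · simpa using mem_weightSet (i := 2) (j := 1 - b) (by rw [isWeight_iff]; omega)
    · simpa using mem_weightSet (i := 1 - a) (j := 2) (by rw [isWeight_iff]; omega)
    · simpa using mem_weightSet (i := 0) (j := 2) (by rw [isWeight_iff]; omega)
  · simp [Fin.sum_univ_three, Prod.ext_iff]
    constructor <;> ring

/-- For the singularity `(x^a, y^b)` with `2 ≤ a ≤ b`, the weight set
`W = ({(i,j) : 2 ≤ i ≤ a, -b+1 ≤ j ≤ 0} \ {(a,0)}) ∪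
     ({(i,j) : -a+1 ≤ i ≤ 0, 2 ≤ j ≤ b} \ {(0,b)})`
contains `0` in its convex hull iff it is not the case that `a = 2` and `b ∈ {2,3,4}`. -/
theorem stmt_5 (a b : ℤ) (ha : 2 ≤ a) (hab : a ≤ b) :
    ((0 : ℝ × ℝ) ∈ convexHull ℝ
      {p : ℝ × ℝ | ∃ i j : ℤ, p = ((i : ℝ), (j : ℝ)) ∧
        ((2 ≤ i ∧ i ≤ a ∧ -b + 1 ≤ j ∧ j ≤ 0 ∧ (i, j) ≠ (a, 0)) ∨
         (-a + 1 ≤ i ∧ i ≤ 0 ∧ 2 ≤ j ∧ j ≤ b ∧ (i, j) ≠ (0, b)))}) ↔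
      ¬ (a = 2 ∧ (b = 2 ∨ b = 3 ∨ b = 4)) := by
  change (0 : ℝ × ℝ) ∈ convexHull ℝ (weightSet a b) ↔ _
  constructor
  · rintro h ⟨rfl, hb⟩
    exact zero_notMem_convexHull_weightSet_two (by omega) h
  · intro h
    have hb : 3 ≤ b := by omega
    refine zero_mem_convexHull_weightSet ha hb ?_
    rcases ha.eq_or_lt with rfl | ha
    · omega
    · nlinarith
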